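/- arXiv:2008.02856 — 2 statements merged into one kernel-verified Lean document; each statement's English description precedes it below -/
import Mathlib

section
/- Suppose AᵀA ≠ 0, λ₁ > λ_r, β > 0, 0 < α < 2/(λ₁ + β), and δ = 2/(λ₁/(λ₁+β) + λ_r/(λ_r+β)). Then for the IPG iterates there exist a positive finite integer τ and positive finite real numbers c and r with r < 1 such that ‖g(t+1)‖ ≤ c · (r · μ_GD)^{t+1} · ‖g(0)‖ for all t > τ. -/
/-!
In the eigenbasis of `AᵀA`, the pre-conditioner error `K(t) - K_β` is multiplied at every step
by `I - α(AᵀA + βI)`, whose spectral norm `q` is `< 1`. Writing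
`g(t+1) = (I - δ AᵀA K_β) g(t) - δ AᵀA (K(t+1) - K_β) g(t)`, the first operator acts on an
eigenvector with eigenvalue `λ` as `1 - δ λ/(λ+β)`. Since `g(t)` lies in the range of `Aᵀ`, only
the nonzero eigenvalues `λ ∈ [λ_r, λ₁]` matter, and for the given `δ` these factors are bounded by
`ρ = (a - b)/(a + b)` with `a = λ₁/(λ₁+β)`, `b = λ_r/(λ_r+β)`; as `x ↦ x/(x+β)` compresses the
spectrum, `ρ < μ_GD`. Hence `‖g(t+1)‖ ≤ (ρ + E q^(t+1)) ‖g(t)‖`, and as soon as `E q^(t+1) ≤ s - ρ`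
(where `E = δ ‖AᵀA‖ ‖K(0) - K_β‖`) for a fixed `s ∈ (ρ, μ_GD)`, the gradient contracts by
`s = (s/μ_GD) μ_GD` per step.
-/

open Matrix Finset

/-- Euclidean norm of a vector in `ℝ^d`. -/
noncomputable def enormVec {d : ℕ} (v : Fin d → ℝ) : ℝ :=
  Real.sqrt (∑ i, v i ^ 2)

section

open Filter Topology WithLp
open scoped Matrix.Norms.L2Operator

theorem enormVec_eq_norm {d : ℕ} (v : Fin d → ℝ) : enormVec v = ‖toLp 2 v‖ := by
  simp [enormVec, EuclideanSpace.norm_eq]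

theorem abs_one_sub_two_div_mul_le {a b c : ℝ} (hb : 0 < b) (hbc : b ≤ c) (hca : c ≤ a) :
    |1 - 2 / (a + b) * c| ≤ (a - b) / (a + b) := by
  have hab : 0 < a + b := by linarith
  have h2 : 2 / (a + b) * (a + b) = 2 := div_mul_cancel₀ 2 hab.ne'
  have hr : (a - b) / (a + b) * (a + b) = a - b := div_mul_cancel₀ _ hab.ne'
  rw [abs_le]
  constructor <;> nlinarith

theorem div_add_le_div_add {x y β : ℝ} (hβ : 0 < β) (hx : 0 ≤ x) (hxy : x ≤ y) :
    x / (x + β) ≤ y / (y + β) := by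
  rw [div_le_div_iff₀ (by positivity) (by linarith)]
  nlinarith

theorem div_add_rate_lt_rate {p q β : ℝ} (hβ : 0 < β) (hq : 0 < q) (hqp : q < p) :
    (p / (p + β) - q / (q + β)) / (p / (p + β) + q / (q + β)) < (p - q) / (p + q) := by
  have hp : 0 < p := hq.trans hqp
  have h : (p / (p + β) - q / (q + β)) / (p / (p + β) + q / (q + β))
      = (p - q) / (2 * p * q / β + (p + q)) := by
    field_simp
    ring
  rw [h]
  exact div_lt_div_of_pos_left (by linarith) (by positivity) (by simp; positivity)

theorem abs_ipg_factor_le {l lr l1 β : ℝ} (hβ : 0 < β) (hlr : 0 < lr) (hlr1 : lr ≤ l1)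
    (hl : l = 0 ∨ l ∈ Set.Icc lr l1) :
    |(1 - 2 / (l1 / (l1 + β) + lr / (lr + β)) * (l / (l + β))) * if l = 0 then 0 else 1| ≤
      (l1 / (l1 + β) - lr / (lr + β)) / (l1 / (l1 + β) + lr / (lr + β)) := by
  have hrange {l : ℝ} (hl : l ∈ Set.Icc lr l1) := abs_one_sub_two_div_mul_le
    (div_pos hlr (by linarith)) (div_add_le_div_add hβ hlr.le hl.1)
    (div_add_le_div_add hβ (hlr.le.trans hl.1) hl.2)
  rcases hl with rfl | hl
  · simpa using (abs_nonneg _).trans (hrange ⟨le_rfl, hlr1⟩)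
  · rw [if_neg (by linarith [hl.1]), mul_one]
    exact hrange hl

theorem abs_one_sub_mul_add_lt_one {α β l l1 : ℝ} (hα0 : 0 < α) (hβ : 0 < β) (hl : 0 ≤ l)
    (hl1 : l ≤ l1) (hα : α < 2 / (l1 + β)) : |1 - α * (l + β)| < 1 := by
  rw [lt_div_iff₀ (by linarith)] at hα
  rw [abs_lt]
  constructor <;> nlinarith

theorem exists_faster_geometric_bound {N : ℕ → ℝ} {ρ μ q E : ℝ} (hN : ∀ t, 0 ≤ N t)
    (hρ : 0 ≤ ρ) (hρμ : ρ < μ) (hq0 : 0 ≤ q) (hq : q < 1)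
    (hstep : ∀ t, N (t + 1) ≤ (ρ + E * q ^ (t + 1)) * N t) (hE : 0 ≤ E) :
    ∃ (τ : ℕ) (c rr : ℝ), 0 < τ ∧ 0 < c ∧ 0 < rr ∧ rr < 1 ∧
      ∀ t, τ < t → N (t + 1) ≤ c * (rr * μ) ^ (t + 1) * N 0 := by
  obtain ⟨s, hρs, hsμ⟩ := exists_between hρμ
  have hs : 0 < s := hρ.trans_lt hρs
  obtain ⟨T, hT⟩ : ∃ T, ∀ t ≥ T, ρ + E * q ^ (t + 1) ≤ s := by
    have : Tendsto (fun t ↦ ρ + E * q ^ (t + 1)) atTop (𝓝 ρ) := by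
      simpa using tendsto_const_nhds.add <|
        ((tendsto_pow_atTop_nhds_zero_of_lt_one hq0 hq).comp (tendsto_add_atTop_nat 1)).const_mul E
    exact eventually_atTop.1 (this.eventually (ge_mem_nhds hρs))
  set L := max (ρ + E) s
  have hL : ∀ t, N (t + 1) ≤ L * N t := fun t ↦ (hstep t).trans <| by
    gcongr
    · exact hN t
    · exact le_max_of_le_left (by gcongr; exact mul_le_of_le_one_right hE (pow_le_one₀ hq0 hq.le))
  have hL0 : 0 < L := hs.trans_le (le_max_right _ _)
  have hhead : N T ≤ L ^ T * N 0 := le_geom hL0.le T fun k _ ↦ hL k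
  have htail : ∀ k, N (T + k) ≤ s ^ k * N T := fun k ↦
    le_geom (u := fun k ↦ N (T + k)) hs.le k fun j _ ↦ (hstep (T + j)).trans <|
      mul_le_mul_of_nonneg_right (hT _ (by omega)) (hN _)
  have hμ : 0 < μ := hs.trans hsμ
  refine ⟨T + 1, (L / s) ^ T, s / μ, by omega, pow_pos (div_pos hL0 hs) T, div_pos hs hμ,
    (div_lt_one hμ).2 hsμ, fun t ht ↦ ?_⟩
  obtain ⟨k, hk⟩ := Nat.exists_eq_add_of_le (show T ≤ t + 1 by omega)
  calc N (t + 1) = N (T + k) := by rw [hk]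
    _ ≤ s ^ k * (L ^ T * N 0) := (htail k).trans (by gcongr)
    _ = (L / s) ^ T * (s / μ * μ) ^ (t + 1) * N 0 := by
      rw [div_mul_cancel₀ _ hμ.ne', hk, div_pow, pow_add]
      field_simp

theorem Antitone.eq_zero_or_mem_Icc {d r : ℕ} {lam : Fin d → ℝ} (hanti : Antitone lam)
    (hzero : ∀ j : Fin d, r ≤ (j : ℕ) → lam j = 0) (hd : 0 < d) (hr : r - 1 < d) (i : Fin d) :
    lam i = 0 ∨ lam i ∈ Set.Icc (lam ⟨r - 1, hr⟩) (lam ⟨0, hd⟩) := by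
  by_cases hi : r ≤ (i : ℕ)
  · exact Or.inl (hzero i hi)
  · exact Or.inr ⟨hanti (Fin.mk_le_mk.2 (by omega)), hanti (Fin.mk_le_mk.2 (Nat.zero_le _))⟩

section OrthoDiag

variable {ι : Type*} [Fintype ι] [DecidableEq ι]

noncomputable def orthoDiag (U : orthogonalGroup ι ℝ) : (ι → ℝ) →ₐ[ℝ] Matrix ι ι ℝ :=
  ((Unitary.conjStarAlgAut ℝ _ U).toAlgEquiv : Matrix ι ι ℝ →ₐ[ℝ] Matrix ι ι ℝ).comp
    (diagonalAlgHom ℝ)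

variable (U : orthogonalGroup ι ℝ)

theorem orthoDiag_apply (c : ι → ℝ) : orthoDiag U c = U * diagonal c * (U : Matrix ι ι ℝ)ᵀ := by
  simp [orthoDiag, star_eq_conjTranspose, conjTranspose_eq_transpose_of_trivial]

theorem transpose_orthoDiag (c : ι → ℝ) : (orthoDiag U c)ᵀ = orthoDiag U c := by
  simp [orthoDiag_apply, transpose_mul, Matrix.mul_assoc]

theorem norm_orthoDiag (c : ι → ℝ) : ‖orthoDiag U c‖ = ‖c‖ := by
  have h := CStarRing.norm_mul_coe_unitary (U * diagonal c) (star U)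
  rw [CStarRing.norm_coe_unitary_mul, l2_opNorm_diagonal, Unitary.coe_star] at h
  simpa [orthoDiag] using h

theorem orthoDiag_support_mul_transpose {m : Type*} [Fintype m] {A : Matrix m ι ℝ}
    {lam : ι → ℝ} (hA : Aᵀ * A = orthoDiag U lam) :
    orthoDiag U (fun i ↦ if lam i = 0 then 0 else 1) * Aᵀ = Aᵀ := by
  set P := orthoDiag U (fun i ↦ if lam i = 0 then 0 else 1)
  have hker : (A * (1 - P))ᵀ * (A * (1 - P)) = 0 := by
    rw [transpose_mul, transpose_sub, transpose_one, transpose_orthoDiag, Matrix.mul_assoc,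
      ← Matrix.mul_assoc Aᵀ, hA, ← map_one (orthoDiag U), ← map_sub, ← map_mul, ← map_mul,
      ← map_zero (orthoDiag U)]
    congr 1
    ext i
    by_cases h : lam i = 0 <;> simp [h]
  have hAP : A * P = A := by
    rw [← conjTranspose_eq_transpose_of_trivial, conjTranspose_mul_self_eq_zero,
      Matrix.mul_sub, Matrix.mul_one, sub_eq_zero] at hker
    exact hker.symm
  calc P * Aᵀ = (A * P)ᵀ := by rw [transpose_mul, transpose_orthoDiag]
    _ = Aᵀ := by rw [hAP]

variable {lam : ι → ℝ} {β : ℝ}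

theorem orthoDiag_add_smul_one : orthoDiag U lam + β • 1 = orthoDiag U (fun i ↦ lam i + β) := by
  rw [← map_one (orthoDiag U), ← map_smul, ← map_add]
  congr 1
  ext i
  simp

theorem orthoDiag_add_smul_one_mul_inv (hβ : 0 < β) (hlam : ∀ i, 0 ≤ lam i) :
    (orthoDiag U lam + β • 1) * orthoDiag U (fun i ↦ (lam i + β)⁻¹) = 1 := by
  rw [orthoDiag_add_smul_one, ← map_mul, ← map_one (orthoDiag U)]
  congr 1
  ext i
  exact mul_inv_cancel₀ (by linarith [hlam i])

theorem norm_one_sub_smul_orthoDiag_add_lt_one {α l1 : ℝ} (hα0 : 0 < α) (hβ : 0 < β)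
    (hα : α < 2 / (l1 + β)) (hlam : ∀ i, lam i ∈ Set.Icc 0 l1) :
    ‖1 - α • (orthoDiag U lam + β • 1)‖ < 1 := by
  rw [orthoDiag_add_smul_one, ← map_one (orthoDiag U), ← map_smul, ← map_sub, norm_orthoDiag,
    pi_norm_lt_iff one_pos]
  intro i
  simpa using abs_one_sub_mul_add_lt_one hα0 hβ (hlam i).1 (hlam i).2 hα

theorem norm_ipg_contraction_le {lr l1 : ℝ} (hβ : 0 < β) (hlr : 0 < lr) (hlr1 : lr ≤ l1)
    (hlam : ∀ i, lam i = 0 ∨ lam i ∈ Set.Icc lr l1) :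
    ‖(1 - (2 / (l1 / (l1 + β) + lr / (lr + β))) •
        (orthoDiag U lam * orthoDiag U (fun i ↦ (lam i + β)⁻¹))) *
      orthoDiag U (fun i ↦ if lam i = 0 then 0 else 1)‖ ≤
      (l1 / (l1 + β) - lr / (lr + β)) / (l1 / (l1 + β) + lr / (lr + β)) := by
  have hρ := (abs_nonneg _).trans (abs_ipg_factor_le hβ hlr hlr1 (Or.inr ⟨le_rfl, hlr1⟩))
  rw [← map_mul, ← map_one (orthoDiag U), ← map_smul, ← map_sub, ← map_mul, norm_orthoDiag,
    pi_norm_le_iff_of_nonneg hρ]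
  intro i
  simpa [div_eq_mul_inv] using abs_ipg_factor_le hβ hlr hlr1 (hlam i)

end OrthoDiag

theorem precond_error_eq {R : Type*} [Ring R] [Algebra ℝ R] {S X : R} (hSX : S * X = 1)
    {K : ℕ → R} {α : ℝ} (hK : ∀ t, K (t + 1) = K t - α • (S * K t - 1)) (t : ℕ) :
    K t - X = (1 - α • S) ^ t * (K 0 - X) := by
  induction t with
  | zero => simp
  | succ t ih =>
    rw [pow_succ', mul_assoc, ← ih, hK, sub_mul, one_mul, smul_mul_assoc, mul_sub, hSX]
    module

theorem ipg_gradient_succ {m n : Type*} [Fintype m] [Fintype n] [DecidableEq n] {A : Matrix m n ℝ}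
    {B : m → ℝ} {x g : ℕ → n → ℝ} {K : ℕ → Matrix n n ℝ} {δ : ℝ}
    (hg : ∀ t, g t = Aᵀ *ᵥ (A *ᵥ x t - B)) (hx : ∀ t, x (t + 1) = x t - δ • K (t + 1) *ᵥ g t)
    (t : ℕ) : g (t + 1) = (1 - δ • (Aᵀ * A * K (t + 1))) *ᵥ g t := by
  rw [hg (t + 1), hx t, mulVec_sub A, mulVec_smul, sub_right_comm, mulVec_sub Aᵀ, mulVec_smul,
    ← hg t, mulVec_mulVec, mulVec_mulVec, Matrix.mul_assoc, sub_mulVec, one_mulVec, smul_mulVec]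

theorem norm_ipg_gradient_succ_le {n : Type*} [Fintype n] [DecidableEq n]
    {H X P R : Matrix n n ℝ} {K : ℕ → Matrix n n ℝ} {g : ℕ → n → ℝ} {δ : ℝ}
    (hg : ∀ t, g (t + 1) = (1 - δ • (H * K (t + 1))) *ᵥ g t) (hP : ∀ t, P *ᵥ g t = g t)
    (hK : ∀ t, K t - X = R ^ t * (K 0 - X)) (t : ℕ) :
    ‖toLp 2 (g (t + 1))‖ ≤
      (‖(1 - δ • (H * X)) * P‖ + |δ| * ‖H‖ * ‖K 0 - X‖ * ‖R‖ ^ (t + 1)) * ‖toLp 2 (g t)‖ := by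
  have hsplit :
      g (t + 1) = ((1 - δ • (H * X)) * P) *ᵥ g t - (δ • (H * (K (t + 1) - X))) *ᵥ g t := by
    rw [hg, ← mulVec_mulVec, hP, ← sub_mulVec, Matrix.mul_sub, smul_sub]
    congr 1
    abel
  have herr : ‖δ • (H * (K (t + 1) - X))‖ ≤ |δ| * ‖H‖ * ‖K 0 - X‖ * ‖R‖ ^ (t + 1) := by
    rw [hK, ← Matrix.mul_assoc, norm_smul, Real.norm_eq_abs]
    calc |δ| * ‖H * R ^ (t + 1) * (K 0 - X)‖ ≤ |δ| * (‖H‖ * ‖R ^ (t + 1)‖ * ‖K 0 - X‖) := by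
          gcongr; exact norm_mul₃_le
      _ ≤ |δ| * (‖H‖ * ‖R‖ ^ (t + 1) * ‖K 0 - X‖) := by
          gcongr; exact norm_pow_le' R t.succ_pos
      _ = _ := by ring
  calc ‖toLp 2 (g (t + 1))‖
      ≤ ‖(1 - δ • (H * X)) * P‖ * ‖toLp 2 (g t)‖ +
          ‖δ • (H * (K (t + 1) - X))‖ * ‖toLp 2 (g t)‖ := by
        rw [hsplit, toLp_sub]
        exact (norm_sub_le _ _).trans (add_le_add (l2_opNorm_mulVec _ _) (l2_opNorm_mulVec _ _))
    _ ≤ _ := by rw [add_mul]; gcongr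

theorem ipg_exists_faster_geometric_bound {m n : Type*} [Fintype m] [Fintype n] [DecidableEq n]
    (U : orthogonalGroup n ℝ) {A : Matrix m n ℝ} {B : m → ℝ} {lam : n → ℝ} {lr l1 α β δ : ℝ}
    (hH : Aᵀ * A = orthoDiag U lam) (hspec : ∀ i, lam i = 0 ∨ lam i ∈ Set.Icc lr l1)
    (hlr : 0 < lr) (hgap : lr < l1) (hβ : 0 < β) (hα0 : 0 < α) (hα : α < 2 / (l1 + β))
    (hδ : δ = 2 / (l1 / (l1 + β) + lr / (lr + β)))
    {K : ℕ → Matrix n n ℝ} {x g : ℕ → n → ℝ}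
    (hK : ∀ t, K (t + 1) = K t - α • ((Aᵀ * A + β • 1) * K t - 1))
    (hg : ∀ t, g t = Aᵀ *ᵥ (A *ᵥ x t - B)) (hx : ∀ t, x (t + 1) = x t - δ • K (t + 1) *ᵥ g t) :
    ∃ (τ : ℕ) (c rr : ℝ), 0 < τ ∧ 0 < c ∧ 0 < rr ∧ rr < 1 ∧ ∀ t, τ < t →
      ‖toLp 2 (g (t + 1))‖ ≤ c * (rr * ((l1 - lr) / (l1 + lr))) ^ (t + 1) * ‖toLp 2 (g 0)‖ := by
  have hbounds : ∀ i, lam i ∈ Set.Icc 0 l1 := fun i ↦ (hspec i).elim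
    (fun h ↦ ⟨h.ge, h ▸ (hlr.trans hgap).le⟩) fun h ↦ ⟨hlr.le.trans h.1, h.2⟩
  have hSK : (Aᵀ * A + β • 1) * orthoDiag U (fun i ↦ (lam i + β)⁻¹) = 1 := by
    rw [hH]
    exact orthoDiag_add_smul_one_mul_inv U hβ fun i ↦ (hbounds i).1
  have hstep := norm_ipg_gradient_succ_le (ipg_gradient_succ hg hx)
    (fun t ↦ by rw [hg, mulVec_mulVec, orthoDiag_support_mul_transpose U hH])
    (precond_error_eq hSK hK)
  rw [hH, hδ] at hstep
  exact exists_faster_geometric_bound (fun t ↦ norm_nonneg (toLp 2 (g t))) (norm_nonneg _)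
    ((norm_ipg_contraction_le U hβ hlr hgap.le hspec).trans_lt (div_add_rate_lt_rate hβ hlr hgap))
    (norm_nonneg _) (norm_one_sub_smul_orthoDiag_add_lt_one U hα0 hβ hα hbounds) hstep
    (by positivity)

end

/-- Theorem 2 of the paper: the IPG method with the optimal step-size
`δ = 2/(λ₁/(λ₁+β) + λ_r/(λ_r+β))` eventually contracts exponentially faster than
gradient descent: `‖g(t+1)‖ ≤ c (r μ_GD)^{t+1} ‖g(0)‖` for all `t > τ`, with `r < 1`. -/
theorem ipg_beats_gradient_descent
    (n d : ℕ) (hd : 0 < d)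
    (A : Matrix (Fin n) (Fin d) ℝ) (B : Fin n → ℝ)
    (lam : Fin d → ℝ) (V : Matrix (Fin d) (Fin d) ℝ)
    (hV : Vᵀ * V = 1)
    (hdiag : Aᵀ * A = V * Matrix.diagonal lam * Vᵀ)
    (hanti : Antitone lam)
    (r : ℕ) (hr1 : 1 ≤ r) (hrd : r ≤ d)
    (hlamr : 0 < lam ⟨r - 1, by omega⟩)
    (hzero : ∀ j : Fin d, r ≤ (j : ℕ) → lam j = 0)
    (hgap : lam ⟨r - 1, by omega⟩ < lam ⟨0, hd⟩)
    (α β δ : ℝ) (hβ : 0 < β)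
    (hα0 : 0 < α) (hα : α < 2 / (lam ⟨0, hd⟩ + β))
    (hδ : δ = 2 / (lam ⟨0, hd⟩ / (lam ⟨0, hd⟩ + β) +
        lam ⟨r - 1, by omega⟩ / (lam ⟨r - 1, by omega⟩ + β)))
    (K : ℕ → Matrix (Fin d) (Fin d) ℝ)
    (hK : ∀ t, K (t + 1) = K t - α • ((Aᵀ * A + β • 1) * K t - 1))
    (x : ℕ → Fin d → ℝ) (g : ℕ → Fin d → ℝ)
    (hg : ∀ t, g t = Aᵀ.mulVec (A.mulVec (x t) - B))
    (hx : ∀ t, x (t + 1) = x t - δ • (K (t + 1)).mulVec (g t)) :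
    ∃ (τ : ℕ) (c rr : ℝ), 0 < τ ∧ 0 < c ∧ 0 < rr ∧ rr < 1 ∧
      ∀ t : ℕ, τ < t →
        enormVec (g (t + 1)) ≤
          c * (rr * ((lam ⟨0, hd⟩ - lam ⟨r - 1, by omega⟩) /
              (lam ⟨0, hd⟩ + lam ⟨r - 1, by omega⟩))) ^ (t + 1) * enormVec (g 0) := by
  obtain ⟨τ, c, rr, hτ, hc, hrr0, hrr1, hbound⟩ := ipg_exists_faster_geometric_bound
    ⟨V, (mem_orthogonalGroup_iff' _ _).2 hV⟩ (by rw [hdiag, orthoDiag_apply])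
    (hanti.eq_zero_or_mem_Icc hzero hd (by omega)) hlamr hgap hβ hα0 hα hδ hK hg hx
  refine ⟨τ, c, rr, hτ, hc, hrr0, hrr1, fun t ht ↦ ?_⟩
  simpa only [enormVec_eq_norm] using hbound t ht
end

section
/- Under the noisy IPG model, suppose additionally that ρ < ρ_j for every j ∈ {1, …, d} and that w < w_bd. Then there exists a finite non-negative integer T′ such that R(T′+1) < 1 and limsup_{t→∞} ‖z(t)‖ ≤ w/(1 − R(T′+1)). -/
/-!
Write `M = AᵀA`. Subtracting `M⁻¹` from the gain recursion gives
`K⁰(t+1) − M⁻¹ = (I − αM)(K(t) − M⁻¹)`, so every column error is contracted by `ρ` and then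
perturbed by at most `w`: `‖k_j(t) − k_{j,0}‖ ≤ ρᵗ‖k̃⁰_j(0)‖ + (1 + ⋯ + ρᵗ)w`. Since
`I − K M = −(K − M⁻¹)M` and `‖M‖ ≤ λ₁`, bounding the operator norm by the Frobenius norm gives
`‖z(t+1)‖ ≤ R(t+1)‖z(t)‖ + w`. The condition `ρ < ρ_j` makes `R` nonincreasing, and
`R(t) → λ₁√d · w/(1 − ρ) < 1` because `w < w_bd`. So after some `T′` the error obeys an affine
recursion with contraction rate at most `R(T′+1) < 1`, whose limsup is at most `w/(1 − R(T′+1))`.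
-/

open Matrix Finset Filter

noncomputable def enorm_euc {d : ℕ} (v : Fin d → ℝ) : ℝ :=
  Real.sqrt (∑ i, v i ^ 2)

def mcol {n d : ℕ} (M : Matrix (Fin n) (Fin d) ℝ) (j : Fin d) : Fin n → ℝ :=
  fun i => M i j

open Topology

section EuclideanNorm

variable {m n d : ℕ}

lemma enorm_euc_eq_norm (v : Fin d → ℝ) : enorm_euc v = ‖WithLp.toLp 2 v‖ := by
  simp [enorm_euc, EuclideanSpace.norm_eq, sq_abs]

lemma enorm_euc_nonneg (v : Fin d → ℝ) : 0 ≤ enorm_euc v :=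
  Real.sqrt_nonneg _

lemma enorm_euc_add_le (u v : Fin d → ℝ) : enorm_euc (u + v) ≤ enorm_euc u + enorm_euc v := by
  simpa only [enorm_euc_eq_norm, WithLp.toLp_add] using norm_add_le _ _

lemma enorm_euc_sum_le {ι : Type*} (s : Finset ι) (f : ι → Fin d → ℝ) :
    enorm_euc (∑ i ∈ s, f i) ≤ ∑ i ∈ s, enorm_euc (f i) := by
  simpa only [enorm_euc_eq_norm, WithLp.toLp_sum] using norm_sum_le _ _

lemma enorm_euc_smul (c : ℝ) (v : Fin d → ℝ) : enorm_euc (c • v) = |c| * enorm_euc v := by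
  simp only [enorm_euc_eq_norm, WithLp.toLp_smul, norm_smul, Real.norm_eq_abs]

lemma enorm_euc_neg (v : Fin d → ℝ) : enorm_euc (-v) = enorm_euc v := by
  simp only [enorm_euc_eq_norm, WithLp.toLp_neg, norm_neg]

lemma enorm_euc_eq_sqrt_dotProduct (v : Fin d → ℝ) : enorm_euc v = √(v ⬝ᵥ v) := by
  simp [enorm_euc, dotProduct, sq]

lemma mcol_mul (P : Matrix (Fin m) (Fin n) ℝ) (Q : Matrix (Fin n) (Fin d) ℝ) (j : Fin d) :
    mcol (P * Q) j = P *ᵥ mcol Q j := by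
  ext i
  simp [mcol, mul_apply, mulVec, dotProduct]

lemma enorm_euc_mulVec_le_sqrt_sum_col (N : Matrix (Fin n) (Fin d) ℝ) (u : Fin d → ℝ) :
    enorm_euc (N *ᵥ u) ≤ √(∑ j, enorm_euc (mcol N j) ^ 2) * enorm_euc u := by
  have hcols : N *ᵥ u = ∑ j, u j • mcol N j := by
    ext i
    simp [mulVec, dotProduct, mcol, mul_comm]
  calc enorm_euc (N *ᵥ u) ≤ ∑ j, |u j| * enorm_euc (mcol N j) := by
        simpa only [hcols, enorm_euc_smul] using enorm_euc_sum_le univ fun j => u j • mcol N j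
    _ ≤ √(∑ j, |u j| ^ 2) * √(∑ j, enorm_euc (mcol N j) ^ 2) :=
        Real.sum_mul_le_sqrt_mul_sqrt _ _ _
    _ = √(∑ j, enorm_euc (mcol N j) ^ 2) * enorm_euc u := by
        simp only [sq_abs, enorm_euc, mul_comm]

lemma enorm_euc_mulVec_of_transpose_mul_self {U : Matrix (Fin n) (Fin d) ℝ} (hU : Uᵀ * U = 1)
    (v : Fin d → ℝ) : enorm_euc (U *ᵥ v) = enorm_euc v := by
  rw [enorm_euc_eq_sqrt_dotProduct, enorm_euc_eq_sqrt_dotProduct, dotProduct_mulVec,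
    ← mulVec_transpose, mulVec_mulVec, hU, one_mulVec]

lemma enorm_euc_diagonal_mulVec_le {lam : Fin d → ℝ} {L : ℝ} (hL0 : 0 ≤ L)
    (hL : ∀ j, |lam j| ≤ L) (v : Fin d → ℝ) :
    enorm_euc (diagonal lam *ᵥ v) ≤ L * enorm_euc v := by
  rw [enorm_euc, enorm_euc, ← Real.sqrt_sq hL0, ← Real.sqrt_mul (sq_nonneg L), mul_sum]
  gcongr with j
  rw [mulVec_diagonal, mul_pow]
  gcongr ?_ * _
  exact sq_le_sq' (abs_le.mp (hL j)).1 (abs_le.mp (hL j)).2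

lemma enorm_euc_conj_diagonal_mulVec_le {V : Matrix (Fin d) (Fin d) ℝ} (hV : Vᵀ * V = 1)
    {lam : Fin d → ℝ} {L : ℝ} (hL0 : 0 ≤ L) (hL : ∀ j, |lam j| ≤ L) (v : Fin d → ℝ) :
    enorm_euc ((V * diagonal lam * Vᵀ) *ᵥ v) ≤ L * enorm_euc v := by
  have hVt : (Vᵀ)ᵀ * Vᵀ = 1 := by rw [transpose_transpose]; exact mul_eq_one_comm.mp hV
  rw [← mulVec_mulVec, ← mulVec_mulVec, enorm_euc_mulVec_of_transpose_mul_self hV,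
    ← enorm_euc_mulVec_of_transpose_mul_self hVt v]
  exact enorm_euc_diagonal_mulVec_le hL0 hL _

lemma pos_of_posDef_conj_diagonal {V : Matrix (Fin d) (Fin d) ℝ} (hV : Vᵀ * V = 1)
    {lam : Fin d → ℝ} (h : (V * diagonal lam * Vᵀ).PosDef) (j : Fin d) : 0 < lam j := by
  have hstar : V * diagonal lam * star V = V * diagonal lam * Vᵀ := by
    rw [star_eq_conjTranspose, conjTranspose_eq_transpose_of_trivial]
  rw [← hstar, (IsUnit.of_mul_eq_one_right _ hV).posDef_star_right_conjugate_iff] at h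
  exact posDef_diagonal_iff.mp h j

end EuclideanNorm

noncomputable def noisyIterBound (ρ w e : ℝ) (t : ℕ) : ℝ :=
  ρ ^ t * e + (∑ i ∈ range (t + 1), ρ ^ i) * w

section NoisyIterBound

variable {ρ w e : ℝ}

lemma noisyIterBound_zero : noisyIterBound ρ w e 0 = e + w := by
  simp [noisyIterBound]

lemma noisyIterBound_succ (t : ℕ) :
    noisyIterBound ρ w e (t + 1) = ρ * noisyIterBound ρ w e t + w := by
  simp only [noisyIterBound, geom_sum_succ (n := t + 1), pow_succ]
  ring

lemma le_noisyIterBound {u : ℕ → ℝ} (hρ : 0 ≤ ρ) (h0 : u 0 ≤ e + w)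
    (hstep : ∀ t, u (t + 1) ≤ ρ * u t + w) (t : ℕ) : u t ≤ noisyIterBound ρ w e t := by
  induction t with
  | zero => rwa [noisyIterBound_zero]
  | succ t ih =>
    rw [noisyIterBound_succ]
    exact (hstep t).trans (by gcongr)

lemma noisyIterBound_nonneg (hρ : 0 ≤ ρ) (hw : 0 ≤ w) (he : 0 ≤ e) (t : ℕ) :
    0 ≤ noisyIterBound ρ w e t := by
  unfold noisyIterBound
  positivity

lemma noisyIterBound_antitone (hρ : 0 ≤ ρ) (h : ρ * (e + w) ≤ e) :
    Antitone (noisyIterBound ρ w e) := by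
  refine antitone_nat_of_succ_le fun t => ?_
  have hdiff : noisyIterBound ρ w e (t + 1)
      = noisyIterBound ρ w e t + ρ ^ t * (ρ * (e + w) - e) := by
    simp only [noisyIterBound, sum_range_succ _ (t + 1), pow_succ]
    ring
  rw [hdiff]
  exact add_le_of_nonpos_right (mul_nonpos_of_nonneg_of_nonpos (by positivity) (by linarith))

lemma tendsto_noisyIterBound (hρ0 : 0 ≤ ρ) (hρ1 : ρ < 1) :
    Tendsto (noisyIterBound ρ w e) atTop (𝓝 (w / (1 - ρ))) := by
  have hgeom : Tendsto (fun t => ∑ i ∈ range (t + 1), ρ ^ i) atTop (𝓝 (1 - ρ)⁻¹) :=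
    (tendsto_add_atTop_iff_nat 1).2 (hasSum_geometric_of_lt_one hρ0 hρ1).tendsto_sum_nat
  have h := ((tendsto_pow_atTop_nhds_zero_of_lt_one hρ0 hρ1).mul_const e).add (hgeom.mul_const w)
  rw [zero_mul, zero_add, ← div_eq_inv_mul] at h
  exact h

variable {ι : Type*} [Fintype ι] {e : ι → ℝ}

lemma antitone_sqrt_sum_sq_noisyIterBound (hρ : 0 ≤ ρ) (hw : 0 ≤ w) (he : ∀ j, 0 ≤ e j)
    (h : ∀ j, ρ * (e j + w) ≤ e j) :
    Antitone fun t => √(∑ j, noisyIterBound ρ w (e j) t ^ 2) := fun _ _ hst =>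
  Real.sqrt_le_sqrt <| sum_le_sum fun j _ =>
    pow_le_pow_left₀ (noisyIterBound_nonneg hρ hw (he j) _)
      (noisyIterBound_antitone hρ (h j) hst) 2

lemma tendsto_sqrt_sum_sq_noisyIterBound (hρ0 : 0 ≤ ρ) (hρ1 : ρ < 1) (hw : 0 ≤ w) :
    Tendsto (fun t => √(∑ j, noisyIterBound ρ w (e j) t ^ 2)) atTop
      (𝓝 (√(Fintype.card ι) * (w / (1 - ρ)))) := by
  have h := (tendsto_finsetSum univ fun j _ =>
    (tendsto_noisyIterBound (w := w) (e := e j) hρ0 hρ1).pow 2).sqrt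
  have hlim_nonneg : 0 ≤ w / (1 - ρ) := div_nonneg hw (by linarith)
  simpa [Real.sqrt_mul (Nat.cast_nonneg _), Real.sqrt_sq hlim_nonneg] using h

end NoisyIterBound

lemma limsup_le_of_succ_le_mul_add {u : ℕ → ℝ} {r w : ℝ} (hu : ∀ t, 0 ≤ u t) (hr0 : 0 ≤ r)
    (hr1 : r < 1) {T : ℕ} (hstep : ∀ t ≥ T, u (t + 1) ≤ r * u t + w) :
    limsup u atTop ≤ w / (1 - r) := by
  have hbound : ∀ m, u (m + T) ≤ noisyIterBound r w (u T - w) m :=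
    le_noisyIterBound hr0 (by simp) fun m => by
      simpa only [add_right_comm] using hstep (m + T) (Nat.le_add_left T m)
  have hlim := tendsto_noisyIterBound (w := w) (e := u T - w) hr0 hr1
  rw [← limsup_nat_add u T]
  exact (limsup_le_limsup (Eventually.of_forall hbound)
    (isBoundedUnder_of ⟨0, fun t => hu (t + T)⟩).isCoboundedUnder_le
    hlim.isBoundedUnder_le).trans_eq hlim.limsup_eq

lemma exists_limsup_le_of_succ_le_mul_add {u r : ℕ → ℝ} {w ℓ : ℝ} (hu : ∀ t, 0 ≤ u t)
    (hr0 : ∀ t, 0 ≤ r t) (hr_anti : Antitone r) (hr_lim : Tendsto r atTop (𝓝 ℓ)) (hℓ : ℓ < 1)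
    (hstep : ∀ t, u (t + 1) ≤ r (t + 1) * u t + w) :
    ∃ T : ℕ, r (T + 1) < 1 ∧ limsup u atTop ≤ w / (1 - r (T + 1)) := by
  obtain ⟨T, hT⟩ := eventually_atTop.mp (hr_lim.eventually (gt_mem_nhds hℓ))
  refine ⟨T, hT _ T.le_succ, limsup_le_of_succ_le_mul_add (T := T) hu (hr0 _) (hT _ T.le_succ)
    fun t ht => (hstep t).trans ?_⟩
  exact add_le_add_left (mul_le_mul_of_nonneg_right (hr_anti (Nat.succ_le_succ ht)) (hu t)) w

section NoisyIteration

variable {d : ℕ} {M : Matrix (Fin d) (Fin d) ℝ}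

lemma col_sub_inv_of_gradient_step (hM : IsUnit M) (α : ℝ) (K : Matrix (Fin d) (Fin d) ℝ)
    (j : Fin d) : mcol (K - α • (M * K - 1)) j - mcol M⁻¹ j
      = (1 - α • M) *ᵥ (mcol K j - mcol M⁻¹ j) := by
  have hmat : K - α • (M * K - 1) - M⁻¹ = (1 - α • M) * (K - M⁻¹) := by
    rw [sub_mul, one_mul, smul_mul_assoc, mul_sub,
      mul_nonsing_inv _ ((isUnit_iff_isUnit_det M).mp hM), smul_sub]
    abel
  exact (congrArg (mcol · j) hmat).trans (mcol_mul _ _ j)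

variable {α ρ w : ℝ} {K K0 W : ℕ → Matrix (Fin d) (Fin d) ℝ}

lemma enorm_euc_col_sub_inv_le_noisyIterBound (hM : IsUnit M) (hρ : 0 ≤ ρ)
    (hcontract : ∀ v, enorm_euc ((1 - α • M) *ᵥ v) ≤ ρ * enorm_euc v)
    (hK0 : ∀ t, K0 (t + 1) = K t - α • (M * K t - 1)) (hKnoise : ∀ t, K t = K0 t + W t)
    (hW : ∀ t j, enorm_euc (mcol (W t) j) ≤ w) (t : ℕ) (j : Fin d) :
    enorm_euc (mcol (K t) j - mcol M⁻¹ j)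
      ≤ noisyIterBound ρ w (enorm_euc (mcol (K0 0) j - mcol M⁻¹ j)) t := by
  have hnoise : ∀ t, enorm_euc (mcol (K t) j - mcol M⁻¹ j)
      ≤ enorm_euc (mcol (K0 t) j - mcol M⁻¹ j) + w := fun t => by
    have hsplit : mcol (K t) j - mcol M⁻¹ j = (mcol (K0 t) j - mcol M⁻¹ j) + mcol (W t) j := by
      rw [hKnoise, sub_add_eq_add_sub]
      rfl
    rw [hsplit]
    exact (enorm_euc_add_le _ _).trans (by gcongr; exact hW t j)
  refine le_noisyIterBound (u := fun s => enorm_euc (mcol (K s) j - mcol M⁻¹ j)) hρ (hnoise 0)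
    (fun s => (hnoise (s + 1)).trans (add_le_add_left ?_ w)) t
  rw [hK0, col_sub_inv_of_gradient_step hM]
  exact hcontract _

lemma enorm_euc_one_sub_mul_mulVec_le (hM : IsUnit M) {L : ℝ}
    (hL : ∀ v, enorm_euc (M *ᵥ v) ≤ L * enorm_euc v) {K : Matrix (Fin d) (Fin d) ℝ}
    {c : Fin d → ℝ} (hc : ∀ j, enorm_euc (mcol K j - mcol M⁻¹ j) ≤ c j) (v : Fin d → ℝ) :
    enorm_euc ((1 - K * M) *ᵥ v) ≤ L * √(∑ j, c j ^ 2) * enorm_euc v := by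
  have hfac : 1 - K * M = -((K - M⁻¹) * M) := by
    rw [sub_mul, nonsing_inv_mul _ ((isUnit_iff_isUnit_det M).mp hM), neg_sub]
  have hcols : √(∑ j, enorm_euc (mcol (K - M⁻¹) j) ^ 2) ≤ √(∑ j, c j ^ 2) :=
    Real.sqrt_le_sqrt <| sum_le_sum fun j _ => pow_le_pow_left₀ (enorm_euc_nonneg _) (hc j) 2
  calc enorm_euc ((1 - K * M) *ᵥ v)
      = enorm_euc ((K - M⁻¹) *ᵥ (M *ᵥ v)) := by
        rw [hfac, neg_mulVec, enorm_euc_neg, mulVec_mulVec]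
    _ ≤ √(∑ j, enorm_euc (mcol (K - M⁻¹) j) ^ 2) * enorm_euc (M *ᵥ v) :=
        enorm_euc_mulVec_le_sqrt_sum_col _ _
    _ ≤ √(∑ j, c j ^ 2) * (L * enorm_euc v) :=
        mul_le_mul hcols (hL v) (enorm_euc_nonneg _) (Real.sqrt_nonneg _)
    _ = L * √(∑ j, c j ^ 2) * enorm_euc v := by ring

end NoisyIteration

theorem noisy_ipg_asymptotic_error_bound_general
    (n d : ℕ) (hd : 0 < d)
    (A : Matrix (Fin n) (Fin d) ℝ)
    (hPD : (Aᵀ * A).PosDef)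
    (lam : Fin d → ℝ) (V : Matrix (Fin d) (Fin d) ℝ)
    (hV : Vᵀ * V = 1)
    (hdiag : Aᵀ * A = V * Matrix.diagonal lam * Vᵀ)
    (hanti : Antitone lam)
    (α w ρ : ℝ)
    (hw : 0 < w) (hρ0 : 0 < ρ) (hρ1 : ρ < 1)
    (hcontract : ∀ v : Fin d → ℝ,
      enorm_euc (((1 : Matrix (Fin d) (Fin d) ℝ) - α • (Aᵀ * A)).mulVec v) ≤ ρ * enorm_euc v)
    (K K0 W : ℕ → Matrix (Fin d) (Fin d) ℝ)
    (hK0 : ∀ t, K0 (t + 1) = K t - α • ((Aᵀ * A) * K t - 1))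
    (hKnoise : ∀ t, K t = K0 t + W t)
    (hW : ∀ (t : ℕ) (j : Fin d), enorm_euc (mcol (W t) j) ≤ w)
    (z z0 wx : ℕ → Fin d → ℝ)
    (hz0 : ∀ t, z0 (t + 1) =
      ((1 : Matrix (Fin d) (Fin d) ℝ) - K (t + 1) * (Aᵀ * A)).mulVec (z t))
    (hznoise : ∀ t, z t = z0 t + wx t)
    (hwx : ∀ t, enorm_euc (wx t) ≤ w)
    (S R : ℕ → ℝ)
    (hS : ∀ t, S t = Real.sqrt (∑ j : Fin d,
      (ρ ^ t * enorm_euc (mcol (K0 0) j - mcol (Aᵀ * A)⁻¹ j) +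
        (∑ i ∈ Finset.range (t + 1), ρ ^ i) * w) ^ 2))
    (hR : ∀ t, R t = lam ⟨0, hd⟩ * S t)
    (hρj : ∀ j : Fin d,
      ρ < enorm_euc (mcol (K0 0) j - mcol (Aᵀ * A)⁻¹ j) /
            (enorm_euc (mcol (K0 0) j - mcol (Aᵀ * A)⁻¹ j) + w))
    (hwbd : w < (1 - ρ) / (lam ⟨0, hd⟩ * Real.sqrt d)) :
    ∃ T' : ℕ, R (T' + 1) < 1 ∧
      Filter.limsup (fun t => enorm_euc (z t)) Filter.atTop ≤ w / (1 - R (T' + 1)) := by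
  set L := lam ⟨0, hd⟩
  set e : Fin d → ℝ := fun j => enorm_euc (mcol (K0 0) j - mcol (Aᵀ * A)⁻¹ j)
  obtain rfl : R = fun t => L * √(∑ j, noisyIterBound ρ w (e j) t ^ 2) :=
    funext fun t => by rw [hR, hS]; rfl
  have hlam : ∀ j, 0 < lam j := pos_of_posDef_conj_diagonal hV (hdiag ▸ hPD)
  have hMop : ∀ v, enorm_euc ((Aᵀ * A) *ᵥ v) ≤ L * enorm_euc v := fun v => by
    rw [hdiag]
    refine enorm_euc_conj_diagonal_mulVec_le hV (hlam _).le (fun j => ?_) v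
    rw [abs_of_pos (hlam j)]
    exact hanti (Fin.le_def.mpr (Nat.zero_le _))
  have hρe : ∀ j, ρ * (e j + w) ≤ e j := fun j =>
    (le_div_iff₀ (add_pos_of_nonneg_of_pos (enorm_euc_nonneg _) hw)).mp (hρj j).le
  have hlim_lt : L * (√d * (w / (1 - ρ))) < 1 := by
    have hLd : 0 < L * √d := mul_pos (hlam _) (Real.sqrt_pos.mpr (Nat.cast_pos.mpr hd))
    rw [show L * (√d * (w / (1 - ρ))) = w * (L * √d) / (1 - ρ) by ring]
    exact (div_lt_one (sub_pos.mpr hρ1)).mpr ((lt_div_iff₀ hLd).mp hwbd)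
  refine exists_limsup_le_of_succ_le_mul_add (fun t => enorm_euc_nonneg _)
    (fun t => mul_nonneg (hlam _).le (Real.sqrt_nonneg _))
    ((antitone_sqrt_sum_sq_noisyIterBound hρ0.le hw.le (fun j => enorm_euc_nonneg _) hρe).const_mul
      (hlam _).le)
    (by simpa using (tendsto_sqrt_sum_sq_noisyIterBound (e := e) hρ0.le hρ1 hw.le).const_mul L)
    hlim_lt fun t => ?_
  rw [hznoise, hz0]
  exact (enorm_euc_add_le _ _).trans (add_le_add (enorm_euc_one_sub_mul_mulVec_le hPD.isUnit
    hMop (enorm_euc_col_sub_inv_le_noisyIterBound hPD.isUnit hρ0.le hcontract hK0 hKnoise hW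
      (t + 1)) _) (hwx _))

/-- Theorem 4 of the paper: under the noisy IPG model, if `ρ < ρ_j`
for every `j` and `w < w_bd`, then there is a finite `T'` with `R(T'+1) < 1` and
`limsup_{t→∞} ‖z(t)‖ ≤ w/(1 − R(T'+1))`. -/
theorem noisy_ipg_asymptotic_error_bound
    (n d : ℕ) (hd : 0 < d)
    (A : Matrix (Fin n) (Fin d) ℝ) (B : Fin n → ℝ)
    (hPD : (Aᵀ * A).PosDef)
    (xstar : Fin d → ℝ) (hxstar : (Aᵀ * A).mulVec xstar = Aᵀ.mulVec B)
    (lam : Fin d → ℝ) (V : Matrix (Fin d) (Fin d) ℝ)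
    (hV : Vᵀ * V = 1)
    (hdiag : Aᵀ * A = V * Matrix.diagonal lam * Vᵀ)
    (hanti : Antitone lam)
    (α w ρ : ℝ) (hα0 : 0 < α) (hα : α < 2 / lam ⟨0, hd⟩)
    (hw : 0 < w) (hρ0 : 0 < ρ) (hρ1 : ρ < 1)
    (hcontract : ∀ v : Fin d → ℝ,
      enorm_euc (((1 : Matrix (Fin d) (Fin d) ℝ) - α • (Aᵀ * A)).mulVec v) ≤ ρ * enorm_euc v)
    (K K0 W : ℕ → Matrix (Fin d) (Fin d) ℝ)
    (hK0 : ∀ t, K0 (t + 1) = K t - α • ((Aᵀ * A) * K t - 1))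
    (hKnoise : ∀ t, K t = K0 t + W t)
    (hW : ∀ (t : ℕ) (j : Fin d), enorm_euc (mcol (W t) j) ≤ w)
    (z z0 wx : ℕ → Fin d → ℝ)
    (hz0 : ∀ t, z0 (t + 1) =
      ((1 : Matrix (Fin d) (Fin d) ℝ) - K (t + 1) * (Aᵀ * A)).mulVec (z t))
    (hznoise : ∀ t, z t = z0 t + wx t)
    (hwx : ∀ t, enorm_euc (wx t) ≤ w)
    (S R : ℕ → ℝ)
    (hS : ∀ t, S t = Real.sqrt (∑ j : Fin d,
      (ρ ^ t * enorm_euc (mcol (K0 0) j - mcol (Aᵀ * A)⁻¹ j) +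
        (∑ i ∈ Finset.range (t + 1), ρ ^ i) * w) ^ 2))
    (hR : ∀ t, R t = lam ⟨0, hd⟩ * S t)
    (hρj : ∀ j : Fin d,
      ρ < enorm_euc (mcol (K0 0) j - mcol (Aᵀ * A)⁻¹ j) /
            (enorm_euc (mcol (K0 0) j - mcol (Aᵀ * A)⁻¹ j) + w))
    (hwbd : w < (1 - ρ) / (lam ⟨0, hd⟩ * Real.sqrt d)) :
    ∃ T' : ℕ, R (T' + 1) < 1 ∧
      Filter.limsup (fun t => enorm_euc (z t)) Filter.atTop ≤ w / (1 - R (T' + 1)) :=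
  noisy_ipg_asymptotic_error_bound_general n d hd A hPD lam V hV hdiag hanti α w ρ hw hρ0 hρ1
    hcontract K K0 W hK0 hKnoise hW z z0 wx hz0 hznoise hwx S R hS hR hρj hwbd
end
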